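/- Let X be a collectionwise normal space and 𝒰 an open cover. If there is a sequence of open covers {𝒰_n} such that for every x ∈ U ∈ 𝒰 there exists n with st(x,𝒰_n) ⊆ U, then 𝒰 admits a 𝒰-small partition of unity. -/

import Mathlib

noncomputable section
open Set Topology TopologicalSpace

/-- `𝒰` is an open cover of `X`. -/
def IsOpenCover {X : Type} [TopologicalSpace X] (𝒰 : Set (Set X)) : Prop :=
  (∀ U ∈ 𝒰, IsOpen U) ∧ ⋃₀ 𝒰 = univ

/-- Star of a point with respect to a family of sets. -/
def ptStar {X : Type} (x : X) (𝒰 : Set (Set X)) : Set X := ⋃₀ {U | U ∈ 𝒰 ∧ x ∈ U}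

/-- Star of a set with respect to a family of sets. -/
def setStar {X : Type} (A : Set X) (𝒰 : Set (Set X)) : Set X :=
  ⋃₀ {U | U ∈ 𝒰 ∧ (U ∩ A).Nonempty}

/-- `𝒱` star-refines `𝒰`. -/
def StarRefines {X : Type} (𝒱 𝒰 : Set (Set X)) : Prop :=
  ∀ x : X, ∃ U ∈ 𝒰, ptStar x 𝒱 ⊆ U

/-- A continuous partition of unity viewed as a map into `l¹(S)` with image in `Δ(S)`. -/
def IsPU {X S : Type} [TopologicalSpace X] (f : X → lp (fun _ : S => ℝ) 1) : Prop :=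
  Continuous f ∧ ∀ x : X, (∀ s : S, 0 ≤ f x s) ∧ HasSum (fun s => f x s) 1

/-- The partition of unity `f` is `𝒰`-small: each carrier lies in a member of `𝒰`. -/
def IsUSmall {X S : Type} [TopologicalSpace X] (𝒰 : Set (Set X))
    (f : X → lp (fun _ : S => ℝ) 1) : Prop :=
  ∀ s : S, ∃ U ∈ 𝒰, {x : X | f x s ≠ 0} ⊆ U

/-- There exists a `𝒰`-small partition of unity on `X`. -/
def ExistsUSmallPU {X : Type} [TopologicalSpace X] (𝒰 : Set (Set X)) : Prop :=
  ∃ (S : Type) (f : X → lp (fun _ : S => ℝ) 1), IsPU f ∧ IsUSmall 𝒰 f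

/-- An indexed family of sets is discrete. -/
def DiscreteFam {X S : Type} [TopologicalSpace X] (A : S → Set X) : Prop :=
  ∀ x : X, ∃ N ∈ nhds x, {s : S | (A s ∩ N).Nonempty}.Subsingleton

/-- A family of sets (as a set of sets) is discrete. -/
def DiscreteSetFam {X : Type} [TopologicalSpace X] (𝒜 : Set (Set X)) : Prop :=
  ∀ x : X, ∃ N ∈ nhds x, {A | A ∈ 𝒜 ∧ (A ∩ N).Nonempty}.Subsingleton

/-- `𝒰` has a σ-discrete closed refinement. -/
def HasSigmaDiscreteClosedRefinement {X : Type} [TopologicalSpace X]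
    (𝒰 : Set (Set X)) : Prop :=
  ∃ D : ℕ → Set (Set X), (∀ n, DiscreteSetFam (D n)) ∧
    (∀ n, ∀ F ∈ D n, IsClosed F) ∧
    (∀ n, ∀ F ∈ D n, ∃ U ∈ 𝒰, F ⊆ U) ∧
    ⋃₀ (⋃ n, D n) = univ

/-- `X` is collectionwise normal. -/
def CwNormal (X : Type) [TopologicalSpace X] : Prop :=
  ∀ (S : Type) (A : S → Set X), (∀ s, IsClosed (A s)) → DiscreteFam A →
    ∃ V : S → Set X, (∀ s, IsOpen (V s)) ∧ (∀ s, A s ⊆ V s) ∧ DiscreteFam V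

/-!
Well-order `𝒰`. For each `n`, the points whose `u n`-star lies in `U ∈ 𝒰` but which lie in no
earlier member of `𝒰` form a closed set `K n U`; for fixed `n` these sets form a discrete family,
and all of them together cover `X`. Collectionwise normality expands each family `K n` to a
discrete open family inside the members of `𝒰`. Urysohn functions for `K n U` inside these
expansions, weighted by `2⁻ⁿ`, are the coordinates of a continuous nowhere-vanishing map into
`ℓ¹`, and normalizing it gives the partition of unity.
-/

open Function

section Star

variable {X : Type}

theorem self_mem_ptStar {𝒱 : Set (Set X)} (h𝒱 : ⋃₀ 𝒱 = univ) (x : X) : x ∈ ptStar x 𝒱 := by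
  obtain ⟨V, hV, hxV⟩ := mem_sUnion.1 (h𝒱 ▸ mem_univ x)
  exact ⟨V, ⟨hV, hxV⟩, hxV⟩

theorem subset_ptStar {𝒱 : Set (Set X)} {V : Set X} {x : X} (hV : V ∈ 𝒱) (hx : x ∈ V) :
    V ⊆ ptStar x 𝒱 :=
  subset_sUnion_of_mem ⟨hV, hx⟩

def starInterior (𝒱 : Set (Set X)) (U : Set X) : Set X := {x | ptStar x 𝒱 ⊆ U}

theorem starInterior_subset {𝒱 : Set (Set X)} (h𝒱 : ⋃₀ 𝒱 = univ) (U : Set X) :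
    starInterior 𝒱 U ⊆ U :=
  fun x hx => hx (self_mem_ptStar h𝒱 x)

theorem isClosed_starInterior [TopologicalSpace X] {𝒱 : Set (Set X)} (h𝒱 : ∀ V ∈ 𝒱, IsOpen V)
    (U : Set X) : IsClosed (starInterior 𝒱 U) := by
  have : (starInterior 𝒱 U)ᶜ = ⋃₀ {V | V ∈ 𝒱 ∧ ¬ V ⊆ U} := by
    ext x
    simp only [starInterior, ptStar, mem_compl_iff, sUnion_subset_iff, mem_sUnion]
    aesop
  rw [← isOpen_compl_iff, this]
  exact isOpen_sUnion fun V hV => h𝒱 V hV.1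

end Star

section DiscreteFamily

variable {X S : Type} [TopologicalSpace X]

theorem DiscreteFam.mono {A B : S → Set X} (hB : DiscreteFam B) (hAB : ∀ s, A s ⊆ B s) :
    DiscreteFam A := by
  intro x
  obtain ⟨N, hN, hsub⟩ := hB x
  exact ⟨N, hN, hsub.anti fun s hs => hs.mono (inter_subset_inter_left N (hAB s))⟩

theorem DiscreteFam.locallyFinite {A : S → Set X} (hA : DiscreteFam A) : LocallyFinite A := by
  intro x
  obtain ⟨N, hN, hsub⟩ := hA x
  exact ⟨N, hN, hsub.finite⟩

theorem DiscreteFam.subsingleton_setOf_mem {A : S → Set X} (hA : DiscreteFam A) (x : X) :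
    {s | x ∈ A s}.Subsingleton := by
  obtain ⟨N, hN, hsub⟩ := hA x
  exact fun s hs t ht => hsub ⟨x, hs, mem_of_mem_nhds hN⟩ ⟨x, ht, mem_of_mem_nhds hN⟩

theorem DiscreteFam.discreteSetFam_range {A : S → Set X} (hA : DiscreteFam A) :
    DiscreteSetFam (range A) := by
  intro x
  obtain ⟨N, hN, hsub⟩ := hA x
  refine ⟨N, hN, ?_⟩
  rintro _ ⟨⟨s, rfl⟩, hs⟩ _ ⟨⟨t, rfl⟩, ht⟩
  rw [hsub hs ht]

theorem DiscreteSetFam.discreteFam_val {𝒜 : Set (Set X)} (h𝒜 : DiscreteSetFam 𝒜) :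
    DiscreteFam fun A : 𝒜 => (A : Set X) := by
  intro x
  obtain ⟨N, hN, hsub⟩ := h𝒜 x
  exact ⟨N, hN, fun A hA B hB => Subtype.ext (hsub ⟨A.2, hA⟩ ⟨B.2, hB⟩)⟩

theorem CwNormal.normalSpace (hX : CwNormal X) : NormalSpace X := by
  refine ⟨fun s t hs ht hst => ?_⟩
  let A : Bool → Set X := fun b => bif b then s else t
  have hA : ∀ b, IsClosed (A b) := by rintro (_ | _) <;> assumption
  have hAdisc : DiscreteFam A := by
    intro x
    obtain ⟨b, hb⟩ : ∃ b, x ∉ A b := by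
      by_cases hx : x ∈ s
      exacts [⟨false, disjoint_left.1 hst hx⟩, ⟨true, hx⟩]
    refine ⟨(A b)ᶜ, (hA b).isOpen_compl.mem_nhds hb, (subsingleton_singleton (a := !b)).anti ?_⟩
    rintro c ⟨y, hyc, hyb⟩
    have hcb : c ≠ b := by rintro rfl; exact hyb hyc
    simpa [Bool.eq_not_iff] using hcb
  obtain ⟨V, hVopen, hAV, hVdisc⟩ := hX Bool A hA hAdisc
  refine ⟨V true, V false, hVopen true, hVopen false, hAV true, hAV false, ?_⟩
  exact disjoint_left.2 fun x hxt hxf =>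
    absurd (hVdisc.subsingleton_setOf_mem x hxt hxf) Bool.true_eq_false_eq_False

section StarLayers

variable {X ι : Type} [LinearOrder ι] (U : ι → Set X) (u : ℕ → Set (Set X))

def starLayer (n : ℕ) (i : ι) : Set X := starInterior (u n) (U i) \ ⋃ j < i, U j

variable {U u}

theorem isClosed_starLayer [TopologicalSpace X] (hU : ∀ i, IsOpen (U i))
    (hu : ∀ n, ∀ V ∈ u n, IsOpen V) (n : ℕ) (i : ι) : IsClosed (starLayer U u n i) :=
  (isClosed_starInterior (hu n) (U i)).sdiff (isOpen_biUnion fun j _ => hU j)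

theorem starLayer_subset {n : ℕ} (hu : ⋃₀ u n = univ) (i : ι) : starLayer U u n i ⊆ U i :=
  fun _ hx => starInterior_subset hu (U i) hx.1

/- A member `W` of `u n` lies in the star of each of its points, so if it met the layers of
`i < j` it would carry a point of the layer of `j` into `U i`, which that layer avoids. -/
theorem discreteFam_starLayer [TopologicalSpace X] {n : ℕ} (hu : IsOpenCover (u n)) :
    DiscreteFam (starLayer U u n) := by
  intro x
  obtain ⟨W, hW, hxW⟩ := mem_sUnion.1 (hu.2 ▸ mem_univ x)
  refine ⟨W, (hu.1 W hW).mem_nhds hxW, ?_⟩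
  have hnlt : ∀ i j, (starLayer U u n i ∩ W).Nonempty → (starLayer U u n j ∩ W).Nonempty →
      ¬ i < j := by
    rintro i j ⟨y, hy, hyW⟩ ⟨z, hz, hzW⟩ hij
    exact hz.2 (mem_biUnion hij (hy.1 (subset_ptStar hW hyW hzW)))
  intro i hi j hj
  exact le_antisymm (le_of_not_gt (hnlt j i hj hi)) (le_of_not_gt (hnlt i j hi hj))

theorem iUnion_starLayer [WellFoundedLT ι] (hU : ⋃ i, U i = univ)
    (hstar : ∀ x i, x ∈ U i → ∃ n, ptStar x (u n) ⊆ U i) :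
    ⋃ n, ⋃ i, starLayer U u n i = univ := by
  refine eq_univ_of_forall fun x => ?_
  have hx : {i | x ∈ U i}.Nonempty := mem_iUnion.1 (hU ▸ mem_univ x)
  obtain ⟨n, hn⟩ := hstar x _ (wellFounded_lt.min_mem {i | x ∈ U i} hx)
  refine mem_iUnion₂.2 ⟨n, _, hn, fun hxj => ?_⟩
  obtain ⟨j, hj, hxj⟩ := mem_iUnion₂.1 hxj
  exact wellFounded_lt.not_lt_min {i | x ∈ U i} hxj hj

end StarLayers

theorem hasSigmaDiscreteClosedRefinement_of_forall_ptStar {X : Type} [TopologicalSpace X]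
    {𝒰 : Set (Set X)} (hcov : IsOpenCover 𝒰) {u : ℕ → Set (Set X)}
    (hu : ∀ n, IsOpenCover (u n)) (hstar : ∀ x, ∀ U ∈ 𝒰, x ∈ U → ∃ n, ptStar x (u n) ⊆ U) :
    HasSigmaDiscreteClosedRefinement 𝒰 := by
  obtain ⟨_, _⟩ := exists_wellFoundedLT 𝒰
  let U : 𝒰 → Set X := Subtype.val
  refine ⟨fun n => range (starLayer U u n),
    fun n => (discreteFam_starLayer (hu n)).discreteSetFam_range, ?_, ?_, ?_⟩
  · rintro n _ ⟨i, rfl⟩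
    exact isClosed_starLayer (U := U) (fun i => hcov.1 i i.2) (fun n => (hu n).1) n i
  · rintro n _ ⟨i, rfl⟩
    exact ⟨i, i.2, starLayer_subset (hu n).2 i⟩
  · simp only [sUnion_iUnion, sUnion_range]
    refine iUnion_starLayer (U := U) ?_ fun x i hx => hstar x i i.2 hx
    rw [← sUnion_eq_iUnion, hcov.2]

theorem tsum_le_of_subsingleton_support {ι : Type} {f : ι → ℝ} {c : ℝ}
    (hf : (support f).Subsingleton) (hc : 0 ≤ c) (hle : ∀ i, f i ≤ c) : ∑' i, f i ≤ c := by
  rcases hf.eq_empty_or_singleton with h | ⟨i, hi⟩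
  · simpa [support_eq_empty_iff.1 h] using hc
  · rw [tsum_eq_single i fun j hj => notMem_support.1 (hi ▸ hj)]
    exact hle i

theorem hasSum_norm_lp_one {S : Type} (f : lp (fun _ : S => ℝ) 1) :
    HasSum (fun s => ‖f s‖) ‖f‖ := by
  simpa using lp.hasSum_norm (p := 1) (by norm_num) f

section PartitionOfUnity

variable {X : Type} [TopologicalSpace X]

theorem isPU_inv_norm_smul {S : Type} {H : X → lp (fun _ : S => ℝ) 1} (hH : Continuous H)
    (hH0 : ∀ x s, 0 ≤ H x s) (hne : ∀ x, H x ≠ 0) : IsPU fun x => ‖H x‖⁻¹ • H x := by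
  refine ⟨(hH.norm.inv₀ fun x => norm_ne_zero_iff.2 (hne x)).smul hH, fun x => ⟨fun s => ?_, ?_⟩⟩
  · rw [lp.coeFn_smul, Pi.smul_apply, smul_eq_mul]
    exact mul_nonneg (inv_nonneg.2 (norm_nonneg _)) (hH0 x s)
  · have hsum : HasSum (fun s => H x s) ‖H x‖ := by
      simpa only [Real.norm_of_nonneg (hH0 x _)] using hasSum_norm_lp_one (H x)
    simpa [inv_mul_cancel₀ (norm_ne_zero_iff.2 (hne x))] using hsum.mul_left ‖H x‖⁻¹

theorem exists_continuous_lp_of_sigma_locallyFinite {ι : ℕ → Type} (g : (n : ℕ) → ι n → C(X, ℝ))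
    (hg0 : ∀ n i x, 0 ≤ g n i x) (hfin : ∀ n, LocallyFinite fun i => support (g n i))
    (hle : ∀ n x, ∑' i, g n i x ≤ 1) :
    ∃ H : X → lp (fun _ : (Σ n, ι n) => ℝ) 1, Continuous H ∧
      ∀ x s, H x s = (1 / 2 : ℝ) ^ s.1 * g s.1 s.2 x := by
  classical
  set w : ℕ → ℝ := fun n => (1 / 2 : ℝ) ^ n
  have hw0 : ∀ n, 0 ≤ w n := fun n => by positivity
  have hrow : ∀ n x, Summable fun i => w n * g n i x := fun n x =>
    (summable_of_hasFiniteSupport ((hfin n).point_finite x)).mul_left (w n)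
  have hrow_le : ∀ n x, ∑' i, w n * g n i x ≤ w n := fun n x => by
    rw [tsum_mul_left]
    exact mul_le_of_le_one_right (hw0 n) (hle n x)
  have hmem : ∀ x, Memℓp (fun s : Σ n, ι n => w s.1 * g s.1 s.2 x) 1 := by
    intro x
    refine memℓp_gen ?_
    simp only [ENNReal.toReal_one, Real.rpow_one,
      Real.norm_of_nonneg (mul_nonneg (hw0 _) (hg0 _ _ x))]
    exact (summable_sigma_of_nonneg fun s => mul_nonneg (hw0 _) (hg0 _ _ x)).2
      ⟨fun n => hrow n x, summable_geometric_two.of_nonneg_of_le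
        (fun n => tsum_nonneg fun i => mul_nonneg (hw0 n) (hg0 n i x)) (hrow_le · x)⟩
  let H : X → lp (fun _ : (Σ n, ι n) => ℝ) 1 := fun x => ⟨_, hmem x⟩
  let e : (n : ℕ) → ι n → X → lp (fun _ : (Σ n, ι n) => ℝ) 1 :=
    fun n i x => lp.single 1 ⟨n, i⟩ (w n * g n i x)
  have he : ∀ n i, support (e n i) ⊆ support (g n i) := fun n i x hx h => hx (by simp [e, h])
  let Φ : ℕ → X → lp (fun _ : (Σ n, ι n) => ℝ) 1 := fun n x => ∑ᶠ i, e n i x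
  have hΦ : ∀ n x, HasSum (e n · x) (Φ n x) := by
    intro n x
    have hfin' : HasFiniteSupport (e n · x) :=
      ((hfin n).point_finite x).subset fun i hi => he n i hi
    simpa only [tsum_eq_finsum hfin'] using
      (summable_of_hasFiniteSupport hfin' : Summable (e n · x)).hasSum
  have hΦ_norm : ∀ n x, ‖Φ n x‖ ≤ w n := fun n x =>
    ((hΦ n x).norm_le_of_bounded (hrow n x).hasSum fun i => by
      rw [lp.norm_single one_pos, Real.norm_of_nonneg (mul_nonneg (hw0 n) (hg0 n i x))]).trans
      (hrow_le n x)
  have hΦ_cont : ∀ n, Continuous (Φ n) := fun n =>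
    continuous_finsum (fun i => (lp.isometry_single _).continuous.comp
      (continuous_const.mul (g n i).continuous)) ((hfin n).subset (he n))
  have hH : H = fun x => ∑' n, Φ n x :=
    funext fun x => ((lp.hasSum_single ENNReal.one_ne_top (H x)).sigma (hΦ · x)).tsum_eq.symm
  exact ⟨H, hH ▸ continuous_tsum hΦ_cont summable_geometric_two hΦ_norm, fun x s => rfl⟩

theorem exists_isPU_of_sigma_locallyFinite {ι : ℕ → Type} (g : (n : ℕ) → ι n → C(X, ℝ))
    (hg0 : ∀ n i x, 0 ≤ g n i x) (hfin : ∀ n, LocallyFinite fun i => support (g n i))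
    (hle : ∀ n x, ∑' i, g n i x ≤ 1) (hpos : ∀ x, ∃ n i, g n i x ≠ 0) :
    ∃ f : X → lp (fun _ : (Σ n, ι n) => ℝ) 1, IsPU f ∧
      ∀ s, {x | f x s ≠ 0} ⊆ support (g s.1 s.2) := by
  obtain ⟨H, hH, hHg⟩ := exists_continuous_lp_of_sigma_locallyFinite g hg0 hfin hle
  have hH0 : ∀ x s, 0 ≤ H x s := fun x s => hHg x s ▸ mul_nonneg (by positivity) (hg0 _ _ x)
  have hne : ∀ x, H x ≠ 0 := by
    intro x hx
    obtain ⟨n, i, hi⟩ := hpos x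
    have := hHg x ⟨n, i⟩
    rw [hx] at this
    exact hi ((mul_eq_zero.1 this.symm).resolve_left (by positivity))
  refine ⟨_, isPU_inv_norm_smul hH hH0 hne, fun s x hx => ?_⟩
  rw [mem_ofPred_eq, lp.coeFn_smul, Pi.smul_apply, smul_eq_mul, hHg] at hx
  exact right_ne_zero_of_mul (right_ne_zero_of_mul hx)

end PartitionOfUnity

theorem existsUSmallPU_of_hasSigmaDiscreteClosedRefinement {X : Type} [TopologicalSpace X]
    (hX : CwNormal X) {𝒰 : Set (Set X)} (h𝒰 : ∀ U ∈ 𝒰, IsOpen U)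
    (hD : HasSigmaDiscreteClosedRefinement 𝒰) : ExistsUSmallPU 𝒰 := by
  have := hX.normalSpace
  obtain ⟨D, hDdisc, hDclosed, hDref, hDcov⟩ := hD
  choose V hVopen hFV hVdisc using fun n =>
    hX (D n) (fun F => F.1) (fun F => hDclosed n F F.2) (hDdisc n).discreteFam_val
  choose U hU hFU using fun n (F : D n) => hDref n F F.2
  choose g hg0 hg1 hg01 using fun n (F : D n) =>
    exists_continuous_zero_one_of_isClosed ((hVopen n F).inter (h𝒰 _ (hU n F))).isClosed_compl
      (hDclosed n F F.2) (disjoint_compl_left_iff_subset.2 (subset_inter (hFV n F) (hFU n F)))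
  have hsupp : ∀ n F, support (g n F) ⊆ V n F ∩ U n F :=
    fun n F => support_subset_iff'.2 (hg0 n F)
  have hdisc : ∀ n, DiscreteFam fun F => support (g n F) :=
    fun n => (hVdisc n).mono fun F => (hsupp n F).trans inter_subset_left
  have hpos : ∀ x, ∃ n F, g n F x ≠ 0 := by
    intro x
    obtain ⟨F, hF, hxF⟩ := mem_sUnion.1 (hDcov ▸ mem_univ x)
    obtain ⟨n, hFn⟩ := mem_iUnion.1 hF
    exact ⟨n, ⟨F, hFn⟩, by simp [hg1 n ⟨F, hFn⟩ hxF]⟩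
  obtain ⟨f, hf, hfg⟩ := exists_isPU_of_sigma_locallyFinite g (fun n F x => (hg01 n F x).1)
    (fun n => (hdisc n).locallyFinite)
    (fun n x => tsum_le_of_subsingleton_support ((hdisc n).subsingleton_setOf_mem x) zero_le_one
      fun F => (hg01 n F x).2) hpos
  exact ⟨_, f, hf, fun s =>
    ⟨U s.1 s.2, hU _ _, (hfg s).trans ((hsupp _ _).trans inter_subset_right)⟩⟩

/-- In a collectionwise normal space, if a sequence of open covers `𝒰_n` satisfies that
every `x ∈ U ∈ 𝒰` has `st(x,𝒰_n) ⊆ U` for some `n`, then `𝒰` admits a `𝒰`-small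
partition of unity. -/
theorem stmt17 (X : Type) [TopologicalSpace X] (hX : CwNormal X)
    (𝒰 : Set (Set X)) (hcov : IsOpenCover 𝒰)
    (u : ℕ → Set (Set X)) (hu : ∀ n, IsOpenCover (u n))
    (hstar : ∀ (x : X), ∀ U ∈ 𝒰, x ∈ U → ∃ n, ptStar x (u n) ⊆ U) :
    ExistsUSmallPU 𝒰 :=
  existsUSmallPU_of_hasSigmaDiscreteClosedRefinement hX hcov.1
    (hasSigmaDiscreteClosedRefinement_of_forall_ptStar hcov hu hstar)
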